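/- Define Y(z) = z·(32z² − (1+4z)^{3/2} + 12z + 1) / (6·(1+4z)^{5/2}·(√(1+4z)+1)) for real z ∈ (−1/4, 1/4). Then Y is real-analytic at 0, its Taylor coefficients at 0 of orders 0 and 1 vanish, and for every integer n ≥ 2 the n-th Taylor coefficient of Y at 0 (i.e. Y^{(n)}(0)/n!) equals ((−1)^n/6)·(2n−1)!/(n!·(n−2)!). -/

import Mathlib

/-!
For `1 + 4z > 0` put `u = √(1 + 4z)`, so `z = (u² - 1)/4`; then `Y` becomes a rational function
of `u` which simplifies to `1/12 - 1/(8u) + 1/(24u³)`, i.e.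
`Y(z) = 1/12 - (1/8)(1 + 4z)^{-1/2} + (1/24)(1 + 4z)^{-3/2}` near `0`.
The `n`-th derivative of `(1 + 4z)^r` at `0` is `4ⁿ r(r-1)⋯(r-n+1)`, and for `r = -1/2, -3/2`
these falling factorials are `(-1)ⁿ(2n)!/(4ⁿ n!)` and `(2n+1)` times that, so for `n ≥ 1`
`Y⁽ⁿ⁾(0) = (n - 1)/12 · (-1)ⁿ(2n)!/n!`.
-/

/-- `Y(z) = z(32z² − (1+4z)^{3/2} + 12z + 1) / (6(1+4z)^{5/2}(√(1+4z)+1))`. -/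
noncomputable def Yfun (z : ℝ) : ℝ :=
  z * (32 * z ^ 2 - (1 + 4 * z) ^ ((3 : ℝ) / 2) + 12 * z + 1)
    / (6 * (1 + 4 * z) ^ ((5 : ℝ) / 2) * (Real.sqrt (1 + 4 * z) + 1))

open Filter Topology Polynomial

theorem contDiffAt_affine_rpow_const {n : WithTop ℕ∞} {a b r x : ℝ} (hx : a + b * x ≠ 0) :
    ContDiffAt ℝ n (fun y => (a + b * y) ^ r) x :=
  (contDiffAt_const.add (contDiffAt_const.mul contDiffAt_id)).rpow_const_of_ne hx

theorem iteratedDeriv_affine_rpow_const (a b r : ℝ) (n : ℕ) {x : ℝ} (hx : 0 < a + b * x) :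
    iteratedDeriv n (fun y => (a + b * y) ^ r) x =
      b ^ n * (descPochhammer ℝ n).eval r * (a + b * x) ^ (r - n) := by
  induction n generalizing x with
  | zero => simp
  | succ n ih =>
    have hpos : ∀ᶠ y in 𝓝 x, 0 < a + b * y :=
      continuousAt_const.eventually_lt (by fun_prop) hx
    have hderiv :
        HasDerivAt (fun y => b ^ n * (descPochhammer ℝ n).eval r * (a + b * y) ^ (r - n))
        (b ^ n * (descPochhammer ℝ n).eval r * (b * (r - n) * (a + b * x) ^ (r - n - 1))) x := by
      have hlin : HasDerivAt (fun y => a + b * y) b x := by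
        simpa using ((hasDerivAt_id x).const_mul b).const_add a
      convert (hlin.rpow_const (p := r - n) (Or.inl hx.ne')).const_mul _ using 1
    rw [iteratedDeriv_succ, (Filter.eventuallyEq_of_mem hpos fun y hy => ih hy).deriv_eq,
      hderiv.deriv, descPochhammer_succ_eval, sub_sub, ← Nat.cast_add_one]
    ring

theorem descPochhammer_eval_sub_one_mul {R : Type*} [CommRing R] (r : R) (n : ℕ) :
    r * (descPochhammer R n).eval (r - 1) = (descPochhammer R n).eval r * (r - n) := by
  rw [← descPochhammer_succ_eval, descPochhammer_succ_left, eval_mul, eval_comp]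
  simp

theorem four_pow_mul_descPochhammer_eval_neg_half (n : ℕ) :
    4 ^ n * (descPochhammer ℝ n).eval (-1 / 2) = (-1) ^ n * (2 * n).factorial / n.factorial := by
  induction n with
  | zero => simp
  | succ n ih =>
    have hfac :
        ((2 * (n + 1)).factorial : ℝ) = 2 * (n + 1) * (2 * n + 1) * (2 * n).factorial := by
      rw [show 2 * (n + 1) = 2 * n + 1 + 1 by ring, Nat.factorial_succ, Nat.factorial_succ]
      push_cast
      ring
    calc 4 ^ (n + 1) * (descPochhammer ℝ (n + 1)).eval (-1 / 2)
        = 4 ^ n * (descPochhammer ℝ n).eval (-1 / 2) * (-2 * (2 * n + 1)) := by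
          rw [descPochhammer_succ_eval]
          ring
      _ = (-1) ^ (n + 1) * (2 * (n + 1)).factorial / (n + 1).factorial := by
          rw [ih, hfac, Nat.factorial_succ]
          push_cast
          field_simp
          ring

theorem descPochhammer_eval_neg_three_halves (n : ℕ) :
    (descPochhammer ℝ n).eval (-3 / 2) = (2 * n + 1) * (descPochhammer ℝ n).eval (-1 / 2) := by
  have h := descPochhammer_eval_sub_one_mul (-1 / 2 : ℝ) n
  rw [show (-1 / 2 : ℝ) - 1 = -3 / 2 by norm_num] at h
  linear_combination (-2 : ℝ) * h

theorem Yfun_eq_of_pos {z : ℝ} (hz : 0 < 1 + 4 * z) :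
    Yfun z = 1 / 12 - 1 / 8 * (1 + 4 * z) ^ ((-1 : ℝ) / 2)
      + 1 / 24 * (1 + 4 * z) ^ ((-3 : ℝ) / 2) := by
  have hu : 0 < √(1 + 4 * z) := Real.sqrt_pos.2 hz
  have hz' : z = (√(1 + 4 * z) ^ 2 - 1) / 4 := by rw [Real.sq_sqrt hz.le]; ring
  rw [Yfun]
  simp only [Real.rpow_div_two_eq_sqrt _ hz.le, Real.rpow_neg hu.le, Real.rpow_one,
    Real.rpow_ofNat]
  generalize √(1 + 4 * z) = u at hu hz'
  subst hz'
  field_simp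
  ring

theorem Yfun_eventuallyEq : Yfun =ᶠ[𝓝 0] fun z =>
    1 / 12 - 1 / 8 * (1 + 4 * z) ^ ((-1 : ℝ) / 2) + 1 / 24 * (1 + 4 * z) ^ ((-3 : ℝ) / 2) := by
  have hcont : ContinuousAt (fun z : ℝ => 1 + 4 * z) 0 := by fun_prop
  filter_upwards [continuousAt_const.eventually_lt hcont (show (0 : ℝ) < 1 + 4 * 0 by norm_num)]
    with z hz using Yfun_eq_of_pos hz

theorem contDiffAt_one_add_four_mul_rpow {n : WithTop ℕ∞} (r : ℝ) :
    ContDiffAt ℝ n (fun z : ℝ => (1 + 4 * z) ^ r) 0 :=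
  contDiffAt_affine_rpow_const (by norm_num)

theorem contDiffAt_Yfun {n : WithTop ℕ∞} : ContDiffAt ℝ n Yfun 0 := by
  have hpow := contDiffAt_one_add_four_mul_rpow (n := n)
  exact ((contDiffAt_const.sub (contDiffAt_const.mul (hpow _))).add
    (contDiffAt_const.mul (hpow _))).congr_of_eventuallyEq Yfun_eventuallyEq

theorem iteratedDeriv_Yfun_zero {n : ℕ} (hn : n ≠ 0) :
    iteratedDeriv n Yfun 0 = (n - 1) / 12 * ((-1) ^ n * (2 * n).factorial / n.factorial) := by
  have hpow := contDiffAt_one_add_four_mul_rpow (n := n)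
  rw [Yfun_eventuallyEq.iteratedDeriv_eq, iteratedDeriv_fun_add
      (contDiffAt_const.sub (contDiffAt_const.mul (hpow _))) (contDiffAt_const.mul (hpow _)),
    iteratedDeriv_fun_sub contDiffAt_const (contDiffAt_const.mul (hpow _)), iteratedDeriv_const,
    if_neg hn, iteratedDeriv_const_mul_field, iteratedDeriv_const_mul_field,
    iteratedDeriv_affine_rpow_const _ _ _ _ (by norm_num),
    iteratedDeriv_affine_rpow_const _ _ _ _ (by norm_num),
    descPochhammer_eval_neg_three_halves, ← four_pow_mul_descPochhammer_eval_neg_half]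
  simp only [mul_zero, add_zero, Real.one_rpow]
  ring

theorem taylor_coeff_Yfun :
    AnalyticAt ℝ Yfun 0 ∧
    iteratedDeriv 0 Yfun 0 = 0 ∧
    iteratedDeriv 1 Yfun 0 = 0 ∧
    ∀ n : ℕ, 2 ≤ n →
      iteratedDeriv n Yfun 0 / (n.factorial : ℝ) =
        ((-1 : ℝ) ^ n / 6) * ((2 * n - 1).factorial : ℝ)
          / ((n.factorial : ℝ) * ((n - 2).factorial : ℝ)) := by
  refine ⟨contDiffAt_Yfun.analyticAt, by simp [Yfun], by simp [iteratedDeriv_Yfun_zero], ?_⟩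
  intro n hn
  obtain ⟨m, rfl⟩ : ∃ m, n = m + 2 := ⟨n - 2, by omega⟩
  rw [iteratedDeriv_Yfun_zero (by omega), show 2 * (m + 2) = 2 * m + 3 + 1 by ring,
    show 2 * m + 3 + 1 - 1 = 2 * m + 3 by omega, Nat.add_sub_cancel,
    Nat.factorial_succ (2 * m + 3), Nat.factorial_succ (m + 1), Nat.factorial_succ m]
  push_cast
  field_simp
  ring
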